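/- Let R^(t)(s) denote the t-set Ramsey number, i.e. the least N such that every 2-colouring of the t-element subsets of an N-element set admits an s-element subset all of whose t-element subsets have the same colour. Define n_0 = 4, and for 1 ≤ i ≤ 5 define n_i = R^(t_i - 1)(n_{i-1}), where (t_1,t_2,t_3,t_4,t_5) = (3,4,4,5,5) are the lengths of the words s_1 = 132, s_2 = 1232, s_3 = 1312, s_4 = 13232, s_5 = 13132. Then for every n ≥ n_5 + 1 and every 2-colouring c : [3]^n → {0,1}, there exists a monochromatic combinatorial line in [3]^n whose active coordinate set is an interval of [n]. -/
import Mathlib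


/-- `L` is a combinatorial line in `[k]^n` with active coordinate set `S`. -/
def IsCombLine {k n : ℕ} (L : Set (Fin n → Fin k)) (S : Finset (Fin n)) : Prop :=
  S.Nonempty ∧ ∃ a : Fin n → Fin k,
    L = {x | (∀ i ∉ S, x i = a i) ∧ ∀ i ∈ S, ∀ j ∈ S, x i = x j}

/-- `S ⊆ [n]` is an interval `{l, l+1, …, m}`. -/
def IsIntervalSet {n : ℕ} (S : Finset (Fin n)) : Prop :=
  ∃ l m : Fin n, l ≤ m ∧ S = Finset.Icc l m

/-- The `t`-set Ramsey number `R^(t)(s)`: the least `N` such that every 2-colouring of the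
`t`-element subsets of an `N`-element set admits an `s`-element subset all of whose
`t`-element subsets get the same colour. -/
noncomputable def ramseyNumber (t s : ℕ) : ℕ :=
  sInf {N : ℕ | ∀ χ : Finset (Fin N) → Fin 2,
    ∃ H : Finset (Fin N), H.card = s ∧ ∃ d : Fin 2, ∀ A ⊆ H, A.card = t → χ A = d}

/-- The generic 2-colour hypergraph Ramsey property. -/
def RamP (t s N : ℕ) : Prop :=
  ∀ (α : Type) [LinearOrder α] (V : Finset α) (χ : Finset α → Fin 2),
    N ≤ V.card → ∃ H ⊆ V, H.card = s ∧ ∃ d : Fin 2, ∀ A ⊆ H, A.card = t → χ A = d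

theorem ramP_exists : ∀ t s : ℕ, ∃ N, RamP t s N := by
  intro t
  induction t with
  | zero =>
    intro s
    refine ⟨s, fun α _ V χ hV => ?_⟩
    obtain ⟨H, hHV, hHc⟩ := Finset.exists_subset_card_eq hV
    exact ⟨H, hHV, hHc, χ ∅, fun A _ hA => by rw [Finset.card_eq_zero.mp hA]⟩
  | succ t IH =>
    intro s
    -- R s' : a number witnessing t-Ramsey for target size s'
    set R : ℕ → ℕ := fun s' => (IH s').choose with hR
    have hRspec : ∀ s', RamP t s' (R s') := fun s' => (IH s').choose_spec
    -- sizes for the prehomogeneous construction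
    let A : ℕ → ℕ := fun m => Nat.rec 0 (fun _ a => R a + 1) m
    have hA0 : A 0 = 0 := rfl
    have hAs : ∀ m, A (m + 1) = R (A m) + 1 := fun m => rfl
    -- prehomogeneous lemma
    have prehom : ∀ (m : ℕ) (α : Type) (_ : LinearOrder α) (V : Finset α)
        (χ : Finset α → Fin 2), A m ≤ V.card →
        ∃ P ⊆ V, P.card = m ∧ ∃ d : α → Fin 2,
          ∀ B ⊆ P, ∀ (hB : B.Nonempty), B.card = t + 1 → χ B = d (B.min' hB) := by
      intro m
      induction m with
      | zero =>
        intro α _ V χ _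
        exact ⟨∅, Finset.empty_subset V, rfl, fun _ => 0, fun B hB hBne hBc => by
          simp [Finset.subset_empty.mp hB] at hBc⟩
      | succ m ih =>
        intro α inst V χ hV
        have h2 : R (A m) + 1 ≤ V.card := by rw [← hAs m]; exact hV
        have hVne : V.Nonempty := Finset.card_pos.mp (by omega)
        set v := V.min' hVne with hv
        have hvV : v ∈ V := V.min'_mem hVne
        have hcard : R (A m) ≤ (V.erase v).card := by
          rw [Finset.card_erase_of_mem hvV]; omega
        obtain ⟨W, hWV, hWc, dv, hdv⟩ :=
          hRspec (A m) α (V.erase v) (fun B => χ (insert v B)) hcard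
        obtain ⟨P', hP'W, hP'c, d', hd'⟩ := ih α inst W χ (le_of_eq hWc.symm)
        have hvW : v ∉ W := fun h => (Finset.mem_erase.mp (hWV h)).1 rfl
        have hvP' : v ∉ P' := fun h => hvW (hP'W h)
        refine ⟨insert v P', ?_, ?_, fun x => if x = v then dv else d' x, ?_⟩
        · exact Finset.insert_subset hvV
            (hP'W.trans (hWV.trans (Finset.erase_subset v V)))
        · rw [Finset.card_insert_of_notMem hvP', hP'c]
        · intro B hB hBne hBc
          have hlt : ∀ w ∈ W, v < w := fun w hw => by
            have hwV := Finset.mem_erase.mp (hWV hw)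
            exact lt_of_le_of_ne (V.min'_le w hwV.2) (Ne.symm hwV.1)
          by_cases hvB : v ∈ B
          · have hmin : B.min' hBne = v := by
              refine le_antisymm (B.min'_le v hvB) ?_
              have hm := B.min'_mem hBne
              rcases Finset.mem_insert.mp (hB hm) with h | h
              · exact le_of_eq h.symm
              · exact le_of_lt (hlt _ (hP'W h))
            have hBe : B.erase v ⊆ W := fun x hx => by
              have hx' := Finset.mem_erase.mp hx
              exact hP'W ((Finset.mem_insert.mp (hB hx'.2)).resolve_left hx'.1)
            have hBec : (B.erase v).card = t := by
              rw [Finset.card_erase_of_mem hvB, hBc]; omega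
            have := hdv (B.erase v) hBe hBec
            rw [Finset.insert_erase hvB] at this
            rw [this, hmin]
            simp
          · have hBP' : B ⊆ P' := fun x hx =>
              (Finset.mem_insert.mp (hB hx)).resolve_left (fun h => hvB (h ▸ hx))
            have := hd' B hBP' hBne hBc
            rw [this]
            have : B.min' hBne ≠ v := fun h =>
              hvB (h ▸ B.min'_mem hBne)
            simp [this]
    refine ⟨A (2 * s), fun α inst V χ hV => ?_⟩
    obtain ⟨P, hPV, hPc, d, hd⟩ := prehom (2 * s) α inst V χ hV
    have htwo : ∀ y : Fin 2, ¬ y = 0 → y = 1 := by decide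
    have hsplit := Finset.card_filter_add_card_filter_not
      (s := P) (p := fun x => d x = 0)
    by_cases hcase : s ≤ (P.filter (fun x => d x = 0)).card
    · obtain ⟨H, hHP, hHc⟩ := Finset.exists_subset_card_eq hcase
      refine ⟨H, (hHP.trans (Finset.filter_subset _ _)).trans hPV, hHc, 0,
        fun B hBH hBc => ?_⟩
      have hBne : B.Nonempty := Finset.card_pos.mp (by omega)
      have hmem := Finset.mem_filter.mp (hHP (hBH (B.min'_mem hBne)))
      rw [hd B (hBH.trans (hHP.trans (Finset.filter_subset _ _))) hBne hBc, hmem.2]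
    · have h1 : s ≤ (P.filter (fun x => ¬ d x = 0)).card := by omega
      obtain ⟨H, hHP, hHc⟩ := Finset.exists_subset_card_eq h1
      refine ⟨H, (hHP.trans (Finset.filter_subset _ _)).trans hPV, hHc, 1,
        fun B hBH hBc => ?_⟩
      have hBne : B.Nonempty := Finset.card_pos.mp (by omega)
      have hmem := Finset.mem_filter.mp (hHP (hBH (B.min'_mem hBne)))
      rw [hd B (hBH.trans (hHP.trans (Finset.filter_subset _ _))) hBne hBc,
        htwo _ hmem.2]

theorem ramseyNumber_mem (t s : ℕ) :
    ∀ χ : Finset (Fin (ramseyNumber t s)) → Fin 2,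
      ∃ H : Finset (Fin (ramseyNumber t s)), H.card = s ∧
        ∃ d : Fin 2, ∀ A ⊆ H, A.card = t → χ A = d := by
  have hne : {N : ℕ | ∀ χ : Finset (Fin N) → Fin 2,
      ∃ H : Finset (Fin N), H.card = s ∧
        ∃ d : Fin 2, ∀ A ⊆ H, A.card = t → χ A = d}.Nonempty := by
    obtain ⟨N, hN⟩ := ramP_exists t s
    refine ⟨N, fun χ => ?_⟩
    obtain ⟨H, _, hHc, d, hd⟩ := hN (Fin N) Finset.univ χ (by simp)
    exact ⟨H, hHc, d, hd⟩
  exact Nat.sInf_mem hne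

theorem ramsey_avail (t s : ℕ) (V : Finset ℕ) (hV : ramseyNumber t s ≤ V.card)
    (χ : Finset ℕ → Fin 2) :
    ∃ H ⊆ V, H.card = s ∧ ∃ d : Fin 2, ∀ A ⊆ H, A.card = t → χ A = d := by
  obtain ⟨V', hV'V, hV'c⟩ := Finset.exists_subset_card_eq hV
  let e : Fin (ramseyNumber t s) ≃o V' := V'.orderIsoOfFin hV'c
  let f : Fin (ramseyNumber t s) ↪ ℕ :=
    ⟨fun i => (e i : ℕ), fun i j h => e.injective (Subtype.ext h)⟩
  obtain ⟨H', hH'c, d, hd⟩ := ramseyNumber_mem t s (fun A => χ (A.map f))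
  refine ⟨H'.map f, ?_, by rw [Finset.card_map, hH'c], d, ?_⟩
  · intro x hx
    obtain ⟨i, hi, rfl⟩ := Finset.mem_map.mp hx
    exact hV'V (e i).2
  · intro A hA hAc
    have hA' : A = (H'.filter (fun i => f i ∈ A)).map f := by
      ext x
      simp only [Finset.mem_map, Finset.mem_filter]
      constructor
      · intro hx
        obtain ⟨i, hi, rfl⟩ := Finset.mem_map.mp (hA hx)
        exact ⟨i, ⟨hi, hx⟩, rfl⟩
      · rintro ⟨i, ⟨hi, hfi⟩, rfl⟩; exact hfi
    have hc2 : (H'.filter (fun i => f i ∈ A)).card = t := by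
      have := congrArg Finset.card hA'
      rw [Finset.card_map] at this
      omega
    rw [hA']
    exact hd _ (Finset.filter_subset _ _) hc2

-- patterns (symbols 0,1,2 standing for 1,2,3)
def pat1 : ℕ → Fin 3 := fun k => match k with | 0 => 0 | 1 => 2 | _ => 1
def pat2 : ℕ → Fin 3 := fun k => match k with | 0 => 0 | 1 => 1 | 2 => 2 | _ => 1
def pat3 : ℕ → Fin 3 := fun k => match k with | 0 => 0 | 1 => 2 | 2 => 0 | _ => 1
def pat4 : ℕ → Fin 3 := fun k => match k with | 0 => 0 | 1 => 2 | 2 => 1 | 3 => 2 | _ => 1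
def pat5 : ℕ → Fin 3 := fun k => match k with | 0 => 0 | 1 => 2 | 2 => 0 | 3 => 2 | _ => 1

/-- the word in `[3]^n` with cut set `A` and block pattern `p` -/
def wrd (n : ℕ) (p : ℕ → Fin 3) (A : Finset ℕ) : Fin n → Fin 3 :=
  fun i => p ((A.filter (fun x => x ≤ i.val)).card)

/-- five-block word with cuts `a b c d` -/
def W (n a b c d : ℕ) (s0 s1 s2 s3 s4 : Fin 3) : Fin n → Fin 3 :=
  fun i => if i.val < a then s0 else if i.val < b then s1 else if i.val < c then s2
    else if i.val < d then s3 else s4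

lemma fcard2 {a d : ℕ} (h : a < d) (i : ℕ) :
    (({a, d} : Finset ℕ).filter (fun x => x ≤ i)).card =
      if d ≤ i then 2 else if a ≤ i then 1 else 0 := by
  have n1 : a ∉ ({d} : Finset ℕ) := by simp; omega
  simp only [Finset.filter_insert, Finset.filter_singleton]
  split_ifs <;> first | omega | simp [Finset.card_insert_of_notMem, *]

lemma fcard3 {a b c : ℕ} (h1 : a < b) (h2 : b < c) (i : ℕ) :
    (({a, b, c} : Finset ℕ).filter (fun x => x ≤ i)).card =
      if c ≤ i then 3 else if b ≤ i then 2 else if a ≤ i then 1 else 0 := by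
  have n1 : a ∉ ({b, c} : Finset ℕ) := by simp; omega
  have n2 : a ∉ ({c} : Finset ℕ) := by simp; omega
  have n3 : a ∉ ({b} : Finset ℕ) := by simp; omega
  have n4 : b ∉ ({c} : Finset ℕ) := by simp; omega
  simp only [Finset.filter_insert, Finset.filter_singleton]
  split_ifs <;> first | omega | simp [Finset.card_insert_of_notMem, *]

lemma fcard4 {a b c d : ℕ} (h1 : a < b) (h2 : b < c) (h3 : c < d) (i : ℕ) :
    (({a, b, c, d} : Finset ℕ).filter (fun x => x ≤ i)).card =
      if d ≤ i then 4 else if c ≤ i then 3 else if b ≤ i then 2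
        else if a ≤ i then 1 else 0 := by
  have n1 : a ∉ ({b, c, d} : Finset ℕ) := by simp; omega
  have n2 : a ∉ ({c, d} : Finset ℕ) := by simp; omega
  have n3 : a ∉ ({b, d} : Finset ℕ) := by simp; omega
  have n4 : a ∉ ({b, c} : Finset ℕ) := by simp; omega
  have n5 : a ∉ ({b} : Finset ℕ) := by simp; omega
  have n6 : a ∉ ({c} : Finset ℕ) := by simp; omega
  have n7 : a ∉ ({d} : Finset ℕ) := by simp; omega
  have n8 : b ∉ ({c, d} : Finset ℕ) := by simp; omega
  have n9 : b ∉ ({c} : Finset ℕ) := by simp; omega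
  have n10 : b ∉ ({d} : Finset ℕ) := by simp; omega
  have n11 : c ∉ ({d} : Finset ℕ) := by simp; omega
  simp only [Finset.filter_insert, Finset.filter_singleton]
  split_ifs <;> first | omega | simp [Finset.card_insert_of_notMem, *]

section words
variable {n a b c d : ℕ}

lemma w1ad (hab : a < b) (hbc : b < c) (hcd : c < d) :
    wrd n pat1 {a, d} = W n a b c d 0 2 2 2 1 := by
  funext i
  simp only [wrd, W, fcard2 (show a < d by omega)]
  split_ifs <;> first | rfl | omega

lemma w1cd (hab : a < b) (hbc : b < c) (hcd : c < d) :
    wrd n pat1 {c, d} = W n a b c d 0 0 0 2 1 := by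
  funext i
  simp only [wrd, W, fcard2 hcd]
  split_ifs <;> first | rfl | omega

lemma w1ab (hab : a < b) (hbc : b < c) (hcd : c < d) :
    wrd n pat1 {a, b} = W n a b c d 0 2 1 1 1 := by
  funext i
  simp only [wrd, W, fcard2 hab]
  split_ifs <;> first | rfl | omega

lemma w2acd (hab : a < b) (hbc : b < c) (hcd : c < d) :
    wrd n pat2 {a, c, d} = W n a b c d 0 1 1 2 1 := by
  funext i
  simp only [wrd, W, fcard3 (show a < c by omega) hcd]
  split_ifs <;> first | rfl | omega

lemma w2bcd (hab : a < b) (hbc : b < c) (hcd : c < d) :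
    wrd n pat2 {b, c, d} = W n a b c d 0 0 1 2 1 := by
  funext i
  simp only [wrd, W, fcard3 hbc hcd]
  split_ifs <;> first | rfl | omega

lemma w3abd (hab : a < b) (hbc : b < c) (hcd : c < d) :
    wrd n pat3 {a, b, d} = W n a b c d 0 2 0 0 1 := by
  funext i
  simp only [wrd, W, fcard3 hab (show b < d by omega)]
  split_ifs <;> first | rfl | omega

lemma w3abc (hab : a < b) (hbc : b < c) (hcd : c < d) :
    wrd n pat3 {a, b, c} = W n a b c d 0 2 0 1 1 := by
  funext i
  simp only [wrd, W, fcard3 hab hbc]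
  split_ifs <;> first | rfl | omega

lemma w4abcd (hab : a < b) (hbc : b < c) (hcd : c < d) :
    wrd n pat4 {a, b, c, d} = W n a b c d 0 2 1 2 1 := by
  funext i
  simp only [wrd, W, fcard4 hab hbc hcd]
  split_ifs <;> first | rfl | omega

lemma w5abcd (hab : a < b) (hbc : b < c) (hcd : c < d) :
    wrd n pat5 {a, b, c, d} = W n a b c d 0 2 0 2 1 := by
  funext i
  simp only [wrd, W, fcard4 hab hbc hcd]
  split_ifs <;> first | rfl | omega

end words

lemma line_colours {n : ℕ} (c : (Fin n → Fin 3) → Fin 2) (base : Fin n → Fin 3)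
    (l m : Fin n) (hlm : l ≤ m)
    (hno : ¬ ∃ (L : Set (Fin n → Fin 3)) (S : Finset (Fin n)),
      IsCombLine L S ∧ IsIntervalSet S ∧ ∀ x ∈ L, ∀ y ∈ L, c x = c y) :
    ¬ (c (fun i => if i ∈ Finset.Icc l m then 0 else base i)
        = c (fun i => if i ∈ Finset.Icc l m then 1 else base i) ∧
       c (fun i => if i ∈ Finset.Icc l m then 1 else base i)
        = c (fun i => if i ∈ Finset.Icc l m then 2 else base i)) := by
  rintro ⟨h01, h12⟩
  apply hno
  have hl : l ∈ Finset.Icc l m := Finset.mem_Icc.mpr ⟨le_refl l, hlm⟩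
  refine ⟨{x | (∀ i ∉ Finset.Icc l m, x i = base i) ∧
      ∀ i ∈ Finset.Icc l m, ∀ j ∈ Finset.Icc l m, x i = x j}, Finset.Icc l m,
    ⟨⟨l, hl⟩, base, rfl⟩, ⟨l, m, hlm, rfl⟩, ?_⟩
  rintro x ⟨hx1, hx2⟩ y ⟨hy1, hy2⟩
  have repr : ∀ z : Fin n → Fin 3, (∀ i ∉ Finset.Icc l m, z i = base i) →
      (∀ i ∈ Finset.Icc l m, ∀ j ∈ Finset.Icc l m, z i = z j) →
      z = fun i => if i ∈ Finset.Icc l m then z l else base i := by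
    intro z h1 h2
    funext i
    by_cases hi : i ∈ Finset.Icc l m
    · rw [if_pos hi]; exact h2 i hi l hl
    · rw [if_neg hi]; exact h1 i hi
  rw [repr x hx1 hx2, repr y hy1 hy2]
  have all : ∀ t : Fin 3,
      c (fun i => if i ∈ Finset.Icc l m then t else base i)
        = c (fun i => if i ∈ Finset.Icc l m then 0 else base i) := by
    intro t
    fin_cases t
    · rfl
    · exact h01.symm
    · exact (h01.trans h12).symm
  rw [all (x l), all (y l)]

section lines
variable {n a b c d : ℕ}

lemma lineA (hab : a < b) (hbc : b < c) (hcd : c < d) {l m : Fin n}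
    (hl : (l : ℕ) = a) (hm : (m : ℕ) = b - 1) (t : Fin 3) :
    (fun i : Fin n => if i ∈ Finset.Icc l m then t else W n a b c d 0 0 1 2 1 i)
      = W n a b c d 0 t 1 2 1 := by
  funext i
  simp only [Finset.mem_Icc, Fin.le_def, hl, hm, W]
  split_ifs <;> first | rfl | omega

lemma lineB (hab : a < b) (hbc : b < c) (hcd : c < d) {l m : Fin n}
    (hl : (l : ℕ) = b) (hm : (m : ℕ) = c - 1) (t : Fin 3) :
    (fun i : Fin n => if i ∈ Finset.Icc l m then t else W n a b c d 0 2 0 2 1 i)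
      = W n a b c d 0 2 t 2 1 := by
  funext i
  simp only [Finset.mem_Icc, Fin.le_def, hl, hm, W]
  split_ifs <;> first | rfl | omega

lemma lineC (hab : a < b) (hbc : b < c) (hcd : c < d) {l m : Fin n}
    (hl : (l : ℕ) = a) (hm : (m : ℕ) = c - 1) (t : Fin 3) :
    (fun i : Fin n => if i ∈ Finset.Icc l m then t else W n a b c d 0 0 0 2 1 i)
      = W n a b c d 0 t t 2 1 := by
  funext i
  simp only [Finset.mem_Icc, Fin.le_def, hl, hm, W]
  split_ifs <;> first | rfl | omega

lemma lineD (hab : a < b) (hbc : b < c) (hcd : c < d) {l m : Fin n}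
    (hl : (l : ℕ) = b) (hm : (m : ℕ) = d - 1) (t : Fin 3) :
    (fun i : Fin n => if i ∈ Finset.Icc l m then t else W n a b c d 0 2 0 0 1 i)
      = W n a b c d 0 2 t t 1 := by
  funext i
  simp only [Finset.mem_Icc, Fin.le_def, hl, hm, W]
  split_ifs <;> first | rfl | omega

lemma lineE (hab : a < b) (hbc : b < c) (hcd : c < d) {l m : Fin n}
    (hl : (l : ℕ) = c) (hm : (m : ℕ) = d - 1) (t : Fin 3) :
    (fun i : Fin n => if i ∈ Finset.Icc l m then t else W n a b c d 0 2 0 0 1 i)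
      = W n a b c d 0 2 0 t 1 := by
  funext i
  simp only [Finset.mem_Icc, Fin.le_def, hl, hm, W]
  split_ifs <;> first | rfl | omega

end lines

lemma cardP {a b : ℕ} (h : a < b) : ({a, b} : Finset ℕ).card = 2 :=
  Finset.card_pair (by omega)

lemma cardT {a b c : ℕ} (h1 : a < b) (h2 : b < c) :
    ({a, b, c} : Finset ℕ).card = 3 := by
  rw [Finset.card_insert_of_notMem (by simp; omega),
    Finset.card_insert_of_notMem (by simp; omega), Finset.card_singleton]

lemma cardQ {a b c d : ℕ} (h1 : a < b) (h2 : b < c) (h3 : c < d) :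
    ({a, b, c, d} : Finset ℕ).card = 4 := by
  rw [Finset.card_insert_of_notMem (by simp; omega),
    Finset.card_insert_of_notMem (by simp; omega),
    Finset.card_insert_of_notMem (by simp; omega), Finset.card_singleton]

lemma subP {a b : ℕ} {H : Finset ℕ} (ha : a ∈ H) (hb : b ∈ H) :
    ({a, b} : Finset ℕ) ⊆ H :=
  Finset.insert_subset ha (Finset.singleton_subset_iff.mpr hb)

lemma subT {a b c : ℕ} {H : Finset ℕ} (ha : a ∈ H) (hb : b ∈ H) (hc : c ∈ H) :
    ({a, b, c} : Finset ℕ) ⊆ H :=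
  Finset.insert_subset ha (subP hb hc)

lemma subQ {a b c d : ℕ} {H : Finset ℕ} (ha : a ∈ H) (hb : b ∈ H) (hc : c ∈ H)
    (hd : d ∈ H) : ({a, b, c, d} : Finset ℕ) ⊆ H :=
  Finset.insert_subset ha (subT hb hc hd)

theorem intervals_hales_jewett_explicit (n : ℕ)
    (hn : ramseyNumber 4 (ramseyNumber 4 (ramseyNumber 3 (ramseyNumber 3
            (ramseyNumber 2 4)))) + 1 ≤ n)
    (c : (Fin n → Fin 3) → Fin 2) :
    ∃ (L : Set (Fin n → Fin 3)) (S : Finset (Fin n)),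
      IsCombLine L S ∧ IsIntervalSet S ∧ ∀ x ∈ L, ∀ y ∈ L, c x = c y := by
  by_contra hno
  have hV : ramseyNumber 4 (ramseyNumber 4 (ramseyNumber 3 (ramseyNumber 3
      (ramseyNumber 2 4)))) ≤ (Finset.range n).card := by
    rw [Finset.card_range]; omega
  obtain ⟨H5, hH5V, hH5c, g5, hg5⟩ :=
    ramsey_avail 4 _ (Finset.range n) hV (fun A => c (wrd n pat5 A))
  obtain ⟨H4, hH4, hH4c, g4, hg4⟩ :=
    ramsey_avail 4 _ H5 (le_of_eq hH5c.symm) (fun A => c (wrd n pat4 A))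
  obtain ⟨H3, hH3, hH3c, g3, hg3⟩ :=
    ramsey_avail 3 _ H4 (le_of_eq hH4c.symm) (fun A => c (wrd n pat3 A))
  obtain ⟨H2, hH2, hH2c, g2, hg2⟩ :=
    ramsey_avail 3 _ H3 (le_of_eq hH3c.symm) (fun A => c (wrd n pat2 A))
  obtain ⟨H1, hH1, hH1c, g1, hg1⟩ :=
    ramsey_avail 2 4 H2 (le_of_eq hH2c.symm) (fun A => c (wrd n pat1 A))
  -- extract the four points a < b < u < v
  let e := H1.orderIsoOfFin hH1c
  set a := ((e 0 : H1) : ℕ) with ha'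
  set b := ((e 1 : H1) : ℕ) with hb'
  set u := ((e 2 : H1) : ℕ) with hu'
  set v := ((e 3 : H1) : ℕ) with hv'
  have hab : a < b := Subtype.coe_lt_coe.mpr (e.strictMono (by decide))
  have hbu : b < u := Subtype.coe_lt_coe.mpr (e.strictMono (by decide))
  have huv : u < v := Subtype.coe_lt_coe.mpr (e.strictMono (by decide))
  have ha1 : a ∈ H1 := (e 0).2
  have hb1 : b ∈ H1 := (e 1).2
  have hu1 : u ∈ H1 := (e 2).2
  have hv1 : v ∈ H1 := (e 3).2
  have mem2 : ∀ x ∈ H1, x ∈ H2 := fun x hx => hH1 hx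
  have mem3 : ∀ x ∈ H1, x ∈ H3 := fun x hx => hH2 (mem2 x hx)
  have mem4 : ∀ x ∈ H1, x ∈ H4 := fun x hx => hH3 (mem3 x hx)
  have mem5 : ∀ x ∈ H1, x ∈ H5 := fun x hx => hH4 (mem4 x hx)
  have hvn : v < n := Finset.mem_range.mp (hH5V (mem5 v hv1))
  -- the nine colour facts
  have F1 : c (W n a b u v 0 2 2 2 1) = g1 := by
    rw [← w1ad hab hbu huv]
    exact hg1 _ (subP ha1 hv1) (cardP (by omega))
  have F2 : c (W n a b u v 0 0 0 2 1) = g1 := by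
    rw [← w1cd hab hbu huv]
    exact hg1 _ (subP hu1 hv1) (cardP (by omega))
  have F3 : c (W n a b u v 0 2 1 1 1) = g1 := by
    rw [← w1ab hab hbu huv]
    exact hg1 _ (subP ha1 hb1) (cardP (by omega))
  have F4 : c (W n a b u v 0 1 1 2 1) = g2 := by
    rw [← w2acd hab hbu huv]
    exact hg2 _ (subT (mem2 a ha1) (mem2 u hu1) (mem2 v hv1)) (cardT (by omega) (by omega))
  have F5 : c (W n a b u v 0 0 1 2 1) = g2 := by
    rw [← w2bcd hab hbu huv]
    exact hg2 _ (subT (mem2 b hb1) (mem2 u hu1) (mem2 v hv1)) (cardT (by omega) (by omega))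
  have F6 : c (W n a b u v 0 2 0 0 1) = g3 := by
    rw [← w3abd hab hbu huv]
    exact hg3 _ (subT (mem3 a ha1) (mem3 b hb1) (mem3 v hv1)) (cardT (by omega) (by omega))
  have F7 : c (W n a b u v 0 2 0 1 1) = g3 := by
    rw [← w3abc hab hbu huv]
    exact hg3 _ (subT (mem3 a ha1) (mem3 b hb1) (mem3 u hu1)) (cardT (by omega) (by omega))
  have F8 : c (W n a b u v 0 2 1 2 1) = g4 := by
    rw [← w4abcd hab hbu huv]
    exact hg4 _ (subQ (mem4 a ha1) (mem4 b hb1) (mem4 u hu1) (mem4 v hv1))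
      (cardQ hab hbu huv)
  have F9 : c (W n a b u v 0 2 0 2 1) = g5 := by
    rw [← w5abcd hab hbu huv]
    exact hg5 _ (subQ (mem5 a ha1) (mem5 b hb1) (mem5 u hu1) (mem5 v hv1))
      (cardQ hab hbu huv)
  -- bounds
  have han : a < n := by omega
  have hbn : b < n := by omega
  have hun : u < n := by omega
  have hb1n : b - 1 < n := by omega
  have hu1n : u - 1 < n := by omega
  have hv1n : v - 1 < n := by omega
  -- the five lines
  have hA := line_colours c (W n a b u v 0 0 1 2 1) ⟨a, han⟩ ⟨b - 1, hb1n⟩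
    (Fin.mk_le_mk.mpr (by omega)) hno
  rw [lineA hab hbu huv (l := ⟨a, han⟩) (m := ⟨b - 1, hb1n⟩) rfl rfl 0,
    lineA hab hbu huv (l := ⟨a, han⟩) (m := ⟨b - 1, hb1n⟩) rfl rfl 1,
    lineA hab hbu huv (l := ⟨a, han⟩) (m := ⟨b - 1, hb1n⟩) rfl rfl 2,
    F5, F4, F8] at hA
  have hB := line_colours c (W n a b u v 0 2 0 2 1) ⟨b, hbn⟩ ⟨u - 1, hu1n⟩
    (Fin.mk_le_mk.mpr (by omega)) hno
  rw [lineB hab hbu huv (l := ⟨b, hbn⟩) (m := ⟨u - 1, hu1n⟩) rfl rfl 0,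
    lineB hab hbu huv (l := ⟨b, hbn⟩) (m := ⟨u - 1, hu1n⟩) rfl rfl 1,
    lineB hab hbu huv (l := ⟨b, hbn⟩) (m := ⟨u - 1, hu1n⟩) rfl rfl 2,
    F9, F8, F1] at hB
  have hC := line_colours c (W n a b u v 0 0 0 2 1) ⟨a, han⟩ ⟨u - 1, hu1n⟩
    (Fin.mk_le_mk.mpr (by omega)) hno
  rw [lineC hab hbu huv (l := ⟨a, han⟩) (m := ⟨u - 1, hu1n⟩) rfl rfl 0,
    lineC hab hbu huv (l := ⟨a, han⟩) (m := ⟨u - 1, hu1n⟩) rfl rfl 1,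
    lineC hab hbu huv (l := ⟨a, han⟩) (m := ⟨u - 1, hu1n⟩) rfl rfl 2,
    F2, F4, F1] at hC
  have hD := line_colours c (W n a b u v 0 2 0 0 1) ⟨b, hbn⟩ ⟨v - 1, hv1n⟩
    (Fin.mk_le_mk.mpr (by omega)) hno
  rw [lineD hab hbu huv (l := ⟨b, hbn⟩) (m := ⟨v - 1, hv1n⟩) rfl rfl 0,
    lineD hab hbu huv (l := ⟨b, hbn⟩) (m := ⟨v - 1, hv1n⟩) rfl rfl 1,
    lineD hab hbu huv (l := ⟨b, hbn⟩) (m := ⟨v - 1, hv1n⟩) rfl rfl 2,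
    F6, F3, F1] at hD
  have hE := line_colours c (W n a b u v 0 2 0 0 1) ⟨u, hun⟩ ⟨v - 1, hv1n⟩
    (Fin.mk_le_mk.mpr (by omega)) hno
  rw [lineE hab hbu huv (l := ⟨u, hun⟩) (m := ⟨v - 1, hv1n⟩) rfl rfl 0,
    lineE hab hbu huv (l := ⟨u, hun⟩) (m := ⟨v - 1, hv1n⟩) rfl rfl 1,
    lineE hab hbu huv (l := ⟨u, hun⟩) (m := ⟨v - 1, hv1n⟩) rfl rfl 2,
    F6, F7, F9] at hE
  have final : ∀ x1 x2 x3 x4 x5 : Fin 2,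
      ¬(x2 = x2 ∧ x2 = x4) → ¬(x5 = x4 ∧ x4 = x1) → ¬(x1 = x2 ∧ x2 = x1) →
      ¬(x3 = x1 ∧ x1 = x1) → ¬(x3 = x3 ∧ x3 = x5) → False := by decide
  exact final g1 g2 g3 g4 g5 hA hB hC hD hE
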